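/- Let w be a nonempty area sequence with maximum value m, and let i_0(w) be the position of the leftmost letter equal to m in the rightmost block of consecutive letters equal to m in w. Then dinv(ins_{i_0(w) − 1}(w)) = dinv(w) + |Maxb(w)| + |Maxa(w)|, where Maxb(w) = { i : w_i = m } and Maxa(w) = { i : w_i = m − 1 and w_j < m for all j > i }. -/

import Mathlib

/-- The `i`-th letter of the word `w` (`1`-indexed, as in the paper);
defaults to `0` out of range. -/
def get1 (w : List ℕ) (i : ℕ) : ℕ := w.getD (i - 1) 0

/-- `w` is the area sequence of a Dyck path: the first letter is `0` and each
letter exceeds the previous one by at most one. -/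
def IsAreaSeq (w : List ℕ) : Prop :=
  (w ≠ [] → get1 w 1 = 0) ∧ ∀ i, 1 ≤ i → i < w.length → get1 w (i + 1) ≤ get1 w i + 1

/-- Insertion at position `i` (for `0 ≤ i ≤ n`): `ins w 0` prepends a `0`, and
for `1 ≤ i ≤ n`, `ins w i` inserts the letter `w_i + 1` just after position `i`. -/
def ins (w : List ℕ) (i : ℕ) : List ℕ :=
  w.take i ++ (if i = 0 then 0 else get1 w i + 1) :: w.drop i

/-- The area statistic: the sum of the letters. -/
def area (w : List ℕ) : ℕ := w.sum

/-- The dinv statistic: `dinv w = Σ_i d_i` where `d_i` is the number of `j > i`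
with `w_j = w_i` or `w_j = w_i - 1`. -/
def dinv (w : List ℕ) : ℕ :=
  ∑ i ∈ Finset.Icc 1 w.length,
    ((Finset.Ioc i w.length).filter
      (fun j => get1 w j = get1 w i ∨ get1 w j + 1 = get1 w i)).card

/-- The maximal value of a word (`0` for the empty word). -/
def maxVal (w : List ℕ) : ℕ := w.foldr max 0

/-- Positions of the letters of maximal value `m`. -/
def Maxb (w : List ℕ) : Finset ℕ :=
  (Finset.Icc 1 w.length).filter (fun i => get1 w i = maxVal w)

/-- Positions `i` with `w_i = m - 1` such that all letters after position `i`
are `< m`. -/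
def Maxa (w : List ℕ) : Finset ℕ :=
  (Finset.Icc 1 w.length).filter (fun i =>
    get1 w i + 1 = maxVal w ∧ ∀ j ∈ Finset.Ioc i w.length, get1 w j < maxVal w)

/-- The position of the leftmost letter equal to the maximal value `m` in the
rightmost block of consecutive letters equal to `m`. -/
def i0 (w : List ℕ) : ℕ :=
  ((Finset.Icc 1 w.length).filter (fun i =>
    get1 w i = maxVal w ∧ (i = 1 ∨ get1 w (i - 1) ≠ maxVal w))).sup id

/-- The admissible insertion positions of `w`, listed in admissible order:
the elements of `Maxb w` in decreasing order, then the elements of `Maxa w`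
in decreasing order, then `i0 w - 1`.  The empty word has the single
admissible insertion position `0`. -/
def admissible (w : List ℕ) : List ℕ :=
  if w = [] then [0]
  else ((Maxb w).sort (· ≤ ·)).reverse ++ ((Maxa w).sort (· ≤ ·)).reverse ++ [i0 w - 1]

/-- Auxiliary version of the map `ψ`, reading the reversed word. -/
def psiRev : List ℕ → List ℕ
  | [] => []
  | a :: u => ins (psiRev u) ((admissible (psiRev u)).getD a 0)

/-- The map `ψ`: `ψ(ε) = ε` and `ψ(u a) = ins_{c_a}(ψ(u))` where
`c_0, c_1, …, c_k` are the admissible insertion positions of `ψ(u)` in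
admissible order. -/
def psi (w : List ℕ) : List ℕ := psiRev w.reverse

/-- The bounce sequence: `b_1 = 0`, and `b_i = b_{i-1} + 1` if
`b_{i-1} + 1 ≤ w_i`, otherwise `b_i = 0`. -/
def bseq (w : List ℕ) : ℕ → ℕ
  | 0 => 0
  | 1 => 0
  | (i + 2) => if bseq w (i + 1) + 1 ≤ get1 w (i + 2) then bseq w (i + 1) + 1 else 0

/-- The bounces of `w`: positions `1 < i ≤ n` with `b_i = 0`. -/
def bounces (w : List ℕ) : Finset ℕ :=
  (Finset.Icc 2 w.length).filter (fun i => bseq w i = 0)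

/-- The bounce statistic: the sum of the reversed positions `n - i + 1` of the
bounces of `w`. -/
def bounce (w : List ℕ) : ℕ := ∑ i ∈ bounces w, (w.length - i + 1)

/-! Inserting a letter `v` between `t` and `d` creates the dinv pairs `(a, v)` with `a ∈ t`,
`a ∈ {v, v + 1}`, and `(v, b)` with `b ∈ d`, `b ∈ {v, v - 1}`. At position `i0 w - 1` the inserted
letter is the maximum `m` (the area condition forces `w_{i0 - 1} = m - 1`, or `i0 = 1` and
`m = 0`), so the new pairs are the `m`'s of `w`, that is `Maxb w`, plus the `(m - 1)`'s after
position `i0 - 1`. Every `m` after `i0` belongs to the last block of `m`'s, so no `m` follows an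
`(m - 1)` lying after `i0`: these `(m - 1)`'s are exactly `Maxa w`. -/

lemma List.countP_or_of_disjoint {α : Type*} {l : List α} {p q : α → Prop} [DecidablePred p]
    [DecidablePred q] (h : ∀ a ∈ l, ¬(p a ∧ q a)) :
    l.countP (fun a => p a ∨ q a) = l.countP (p ·) + l.countP (q ·) := by
  induction l with
  | nil => rfl
  | cons a l ih =>
    simp only [List.countP_cons, ih fun b hb => h b (List.mem_cons_of_mem a hb)]
    have := h a List.mem_cons_self
    by_cases p a <;> by_cases q a <;> simp_all <;> omega

lemma le_maxVal {w : List ℕ} {a : ℕ} (h : a ∈ w) : a ≤ maxVal w :=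
  List.le_max_of_le (l := w) h le_rfl

lemma maxVal_mem {w : List ℕ} (hne : w ≠ []) : maxVal w ∈ w :=
  List.maximum_mem (List.foldr_max_of_ne_nil (α := ℕ) hne).symm

lemma get1_mem {w : List ℕ} {i : ℕ} (h1 : 1 ≤ i) (hn : i ≤ w.length) : get1 w i ∈ w := by
  rw [get1, List.getD_eq_getElem _ _ (by omega)]
  exact List.getElem_mem _

lemma get1_le_maxVal {w : List ℕ} {i : ℕ} (h1 : 1 ≤ i) (hn : i ≤ w.length) :
    get1 w i ≤ maxVal w :=
  le_maxVal (get1_mem h1 hn)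

lemma card_filter_range_getD (w : List ℕ) (P : ℕ → Prop) [DecidablePred P] :
    ((Finset.range w.length).filter (fun k => P (w.getD k 0))).card = w.countP (P ·) := by
  induction w with
  | nil => simp
  | cons a u ih =>
    rw [Finset.card_filter] at ih ⊢
    rw [List.length_cons, Finset.sum_range_succ', List.countP_cons, ← ih]
    simp [add_comm]

lemma card_filter_Ioc_get1 (w : List ℕ) (i : ℕ) (P : ℕ → Prop) [DecidablePred P] :
    ((Finset.Ioc i w.length).filter (fun j => P (get1 w j))).card = (w.drop i).countP (P ·) := by
  rw [← card_filter_range_getD, ← Finset.Ico_add_one_add_one_eq_Ioc, Finset.card_filter,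
    Finset.card_filter, Finset.sum_Ico_eq_sum_range, List.length_drop]
  refine Finset.sum_congr (by simp) fun k _ => ?_
  simp [get1, List.getD_eq_getElem?_getD, add_right_comm i 1 k]

lemma dinv_eq_sum_countP (w : List ℕ) :
    dinv w = ∑ k ∈ Finset.range w.length,
      (w.drop (k + 1)).countP (fun b => b = w.getD k 0 ∨ b + 1 = w.getD k 0) := by
  rw [dinv, ← Finset.Ico_add_one_right_eq_Icc, Finset.sum_Ico_eq_sum_range]
  refine Finset.sum_congr (by simp) fun k _ => ?_
  rw [card_filter_Ioc_get1 w (1 + k) (fun x => x = get1 w (1 + k) ∨ x + 1 = get1 w (1 + k))]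
  simp [get1, add_comm 1 k]

lemma dinv_cons (a : ℕ) (u : List ℕ) :
    dinv (a :: u) = u.countP (fun b => b = a ∨ b + 1 = a) + dinv u := by
  rw [dinv_eq_sum_countP, dinv_eq_sum_countP, List.length_cons, Finset.sum_range_succ']
  simp [add_comm (List.countP _ _)]

lemma dinv_append_cons (t d : List ℕ) (v : ℕ) :
    dinv (t ++ v :: d) = dinv (t ++ d) + t.countP (fun a => a = v ∨ a = v + 1)
      + d.countP (fun b => b = v ∨ b + 1 = v) := by
  induction t with
  | nil => simp [dinv_cons, add_comm]
  | cons a t ih =>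
    simp only [List.cons_append, dinv_cons, List.countP_append, List.countP_cons, ih]
    grind

lemma dinv_insert_of_forall_le {w : List ℕ} {m : ℕ} (hm : ∀ a ∈ w, a ≤ m) (p : ℕ) :
    dinv (w.take p ++ m :: w.drop p)
      = dinv w + w.countP (· = m) + (w.drop p).countP (· + 1 = m) := by
  have htake : (w.take p).countP (fun a => a = m ∨ a = m + 1) = (w.take p).countP (· = m) :=
    List.countP_congr fun a ha => by
      have := hm a (List.mem_of_mem_take ha)
      simp only [decide_eq_true_eq]; omega
  have hdrop : (w.drop p).countP (fun b => b = m ∨ b + 1 = m)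
      = (w.drop p).countP (· = m) + (w.drop p).countP (· + 1 = m) :=
    List.countP_or_of_disjoint fun _ _ => by omega
  have hsplit : w.countP (· = m) = (w.take p).countP (· = m) + (w.drop p).countP (· = m) := by
    rw [← List.countP_append, List.take_append_drop]
  rw [dinv_append_cons, List.take_append_drop, htake, hdrop, hsplit]
  ring

def maxBlockStarts (w : List ℕ) : Finset ℕ :=
  (Finset.Icc 1 w.length).filter (fun i =>
    get1 w i = maxVal w ∧ (i = 1 ∨ get1 w (i - 1) ≠ maxVal w))

lemma i0_eq_sup_maxBlockStarts (w : List ℕ) : i0 w = (maxBlockStarts w).sup id := rfl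

lemma maxBlockStarts_nonempty {w : List ℕ} (hne : w ≠ []) : (maxBlockStarts w).Nonempty := by
  have hex : ∃ i, 1 ≤ i ∧ i ≤ w.length ∧ get1 w i = maxVal w := by
    obtain ⟨k, hk, hkm⟩ := List.getElem_of_mem (maxVal_mem hne)
    exact ⟨k + 1, by omega, hk, by rw [get1, Nat.add_sub_cancel, List.getD_eq_getElem _ _ hk, hkm]⟩
  obtain ⟨h1, hn, hm⟩ := Nat.find_spec hex
  refine ⟨Nat.find hex, Finset.mem_filter.2 ⟨Finset.mem_Icc.2 ⟨h1, hn⟩, hm, ?_⟩⟩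
  by_contra! hfirst
  exact Nat.find_min hex (by omega : Nat.find hex - 1 < Nat.find hex) ⟨by omega, by omega, hfirst.2⟩

lemma i0_mem_maxBlockStarts {w : List ℕ} (hne : w ≠ []) : i0 w ∈ maxBlockStarts w := by
  obtain ⟨i, hi, hsup⟩ := Finset.exists_mem_eq_sup _ (maxBlockStarts_nonempty hne) id
  rwa [i0_eq_sup_maxBlockStarts, hsup]

lemma le_i0_of_mem_maxBlockStarts {w : List ℕ} {j : ℕ} (hj : j ∈ maxBlockStarts w) : j ≤ i0 w :=
  Finset.le_sup (f := id) hj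

lemma get1_eq_maxVal_of_i0_le {w : List ℕ} {i j : ℕ} (hi : i0 w ≤ i) (hij : i ≤ j)
    (hj : j ≤ w.length) (hjm : get1 w j = maxVal w) : get1 w i = maxVal w := by
  induction j with
  | zero => rwa [Nat.le_zero.1 hij]
  | succ j ih =>
    rcases hij.eq_or_lt with rfl | hlt
    · exact hjm
    refine ih (by omega) (by omega) ?_
    by_contra hprev
    have : j + 1 ∈ maxBlockStarts w :=
      Finset.mem_filter.2 ⟨Finset.mem_Icc.2 ⟨by omega, hj⟩, hjm, Or.inr hprev⟩
    have := le_i0_of_mem_maxBlockStarts this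
    omega

lemma ins_i0_sub_one {w : List ℕ} (hw : IsAreaSeq w) (hne : w ≠ []) :
    ins w (i0 w - 1) = w.take (i0 w - 1) ++ maxVal w :: w.drop (i0 w - 1) := by
  obtain ⟨hrange, hmax, hstart⟩ := Finset.mem_filter.1 (i0_mem_maxBlockStarts hne)
  obtain ⟨h1, hn⟩ := Finset.mem_Icc.1 hrange
  rw [ins]
  congr
  split_ifs with h0
  · have : i0 w = 1 := by omega
    rw [← hmax, this, hw.1 hne]
  · have hstep := hw.2 (i0 w - 1) (by omega) (by omega)
    have hprev := get1_le_maxVal (w := w) (i := i0 w - 1) (by omega) (by omega)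
    rw [Nat.sub_add_cancel h1] at hstep
    omega

lemma card_Maxb (w : List ℕ) : (Maxb w).card = w.countP (· = maxVal w) := by
  rw [Maxb, ← zero_add 1, Finset.Icc_add_one_left_eq_Ioc, card_filter_Ioc_get1 w 0 (· = maxVal w),
    List.drop_zero]

lemma Maxa_eq_filter_Ioc {w : List ℕ} (hne : w ≠ []) :
    Maxa w = (Finset.Ioc (i0 w - 1) w.length).filter (fun i => get1 w i + 1 = maxVal w) := by
  obtain ⟨hrange, hmax, -⟩ := Finset.mem_filter.1 (i0_mem_maxBlockStarts hne)
  obtain ⟨h1, hn⟩ := Finset.mem_Icc.1 hrange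
  ext i
  simp only [Maxa, Finset.mem_filter, Finset.mem_Icc, Finset.mem_Ioc]
  constructor
  · rintro ⟨⟨-, hin⟩, hi, hafter⟩
    refine ⟨⟨?_, hin⟩, hi⟩
    by_contra! hle
    have := hafter (i0 w) ⟨by omega, hn⟩
    omega
  · rintro ⟨⟨hlt, hin⟩, hi⟩
    refine ⟨⟨by omega, hin⟩, hi, fun j ⟨hij, hjn⟩ => ?_⟩
    refine (get1_le_maxVal (by omega) hjn).lt_of_ne fun hjm => ?_
    have := get1_eq_maxVal_of_i0_le (by omega) hij.le hjn hjm
    omega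

lemma card_Maxa {w : List ℕ} (hne : w ≠ []) :
    (Maxa w).card = (w.drop (i0 w - 1)).countP (· + 1 = maxVal w) := by
  rw [Maxa_eq_filter_Ioc hne, card_filter_Ioc_get1 w _ (· + 1 = maxVal w)]

/-- Inserting in a nonempty area sequence `w` at position `i0 w - 1` increases
the dinv by `|Maxb w| + |Maxa w|`. -/
theorem dinv_ins_at_i0 (w : List ℕ) (hw : IsAreaSeq w) (hne : w ≠ []) :
    dinv (ins w (i0 w - 1)) = dinv w + (Maxb w).card + (Maxa w).card := by
  rw [ins_i0_sub_one hw hne, dinv_insert_of_forall_le (fun _ => le_maxVal), card_Maxb,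
    card_Maxa hne]
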